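/- Running PropReq on an internal node n of a multilevel clustering with local buses neither loses nor duplicates requirements: each requirement r in the initial requirement set R(n) is, after PropReq terminates, either still in the requirement set of n or in the requirement set of exactly one child of n (and in no other node), and the requirement set remaining at n together with the sets of requirements moved into the individual children forms a partition of the initial set R(n). In particular, if before the call the requirement sets of all nodes of the tree are pairwise disjoint with union equal to J, the same holds after the call. -/

import Mathlib

attribute [local instance] Classical.propDecidable

/-- A multilevel clustering with local buses: each node carries an element set `A`
(indices of plant components), a list `B` of bus children, a list `M` of non-bus
children, and a requirement index set `R`. -/
inductive MLC (I J : Type) : Type where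
  | mk : Finset I → List (MLC I J) → List (MLC I J) → Finset J → MLC I J

namespace MLC

variable {I J : Type}

/-- The element set `A(n)` of a node. -/
def elems : MLC I J → Finset I | mk A _ _ _ => A
/-- The bus children `B(n)` of a node. -/
def busCh : MLC I J → List (MLC I J) | mk _ B _ _ => B
/-- The non-bus children `M(n)` of a node. -/
def nonbusCh : MLC I J → List (MLC I J) | mk _ _ M _ => M
/-- The requirement index set `R(n)` of a node. -/
def reqs : MLC I J → Finset J | mk _ _ _ R => R
/-- All children `B(n) ∪ M(n)` of a node. -/
def children (t : MLC I J) : List (MLC I J) := t.busCh ++ t.nonbusCh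
/-- Replace the requirement set carried by a node. -/
def setReqs : MLC I J → Finset J → MLC I J | mk A B M _, R' => mk A B M R'

/-- Well-formedness of a multilevel clustering with local buses: a leaf has a
singleton element set and no children; an internal node has at least two children,
whose element sets are nonempty, pairwise disjoint and whose union is the node's
element set. -/
inductive WF : MLC I J → Prop where
  | leaf : ∀ (A : Finset I) (R : Finset J), A.card = 1 → WF (mk A [] [] R)
  | node : ∀ (A : Finset I) (B M : List (MLC I J)) (R : Finset J),
      2 ≤ (B ++ M).length →
      (∀ c ∈ B ++ M, (elems c).Nonempty) →
      (B ++ M).Pairwise (fun c d => Disjoint (elems c) (elems d)) →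
      ((B ++ M).map elems).foldr (· ∪ ·) ∅ = A →
      (∀ c ∈ B ++ M, WF c) →
      WF (mk A B M R)

end MLC

variable {I J : Type}

/-- Requirement `r` is related to cluster `c`: some plant index in the element set of
`c` is involved in `r` according to the domain mapping matrix `PR`. -/
def rel (PR : I → J → Prop) (r : J) (c : MLC I J) : Prop := ∃ p ∈ c.elems, PR p r

/-- The sublist of clusters of `cs` related to requirement `r`. -/
noncomputable def relF (PR : I → J → Prop) (r : J) (cs : List (MLC I J)) :
    List (MLC I J) :=
  cs.filter fun c => decide (rel PR r c)

/-- The requirements of `R` that stay at a node with bus children `B` and non-bus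
children `M`: those for which neither exactly one non-bus child is related, nor
(no non-bus child and exactly one bus child is related). -/
noncomputable def stayReqs (PR : I → J → Prop) (B M : List (MLC I J)) (R : Finset J) :
    Finset J :=
  R.filter fun r =>
    ¬ (relF PR r M).length = 1 ∧ ¬ ((relF PR r M) = [] ∧ (relF PR r B).length = 1)

/-- The requirements of `R` moved by PropReq into the non-bus child `c`:
`c` is the unique related non-bus cluster. -/
noncomputable def toNonbus (PR : I → J → Prop) (M : List (MLC I J)) (R : Finset J)
    (c : MLC I J) : Finset J :=
  R.filter fun r => relF PR r M = [c]

/-- The requirements of `R` moved by PropReq into the bus child `c`: no non-bus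
cluster is related and `c` is the unique related bus cluster. -/
noncomputable def toBus (PR : I → J → Prop) (B M : List (MLC I J)) (R : Finset J)
    (c : MLC I J) : Finset J :=
  R.filter fun r => relF PR r M = [] ∧ relF PR r B = [c]

/-- All plant indices involved in some requirement of `R`. -/
noncomputable def involved (PR : I → J → Prop) [Fintype I] (R : Finset J) : Finset I :=
  Finset.univ.filter fun i => ∃ r ∈ R, PR i r

/-- The subroutine PropReq: distributes the requirements of a node over the node
itself and its bus and non-bus children, and returns (as second component) the
accumulator set `P` of all plant indices involved in the requirements that remain. -/
noncomputable def propReq (PR : I → J → Prop) [Fintype I] :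
    MLC I J → MLC I J × Finset I
  | .mk A B M R =>
    (.mk A (B.map fun c => c.setReqs (c.reqs ∪ toBus PR B M R c))
           (M.map fun c => c.setReqs (c.reqs ∪ toNonbus PR M R c))
           (stayReqs PR B M R),
     involved PR (stayReqs PR B M R))

/-- The output tree of TransformCtoT: each node carries the element set of the
corresponding cluster together with its synthesis subproblem, i.e. a set of plant
indices and a set of requirement indices. -/
inductive SPTree (I J : Type) : Type where
  | mk : Finset I → Finset I → Finset J → List (SPTree I J) → SPTree I J

namespace SPTree

/-- Element set of the cluster corresponding to an output node. -/
def elemsS : SPTree I J → Finset I | mk A _ _ _ => A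
/-- Plant index set of the synthesis subproblem of an output node. -/
def plants : SPTree I J → Finset I | mk _ P _ _ => P
/-- Requirement index set of the synthesis subproblem of an output node. -/
def sreqs : SPTree I J → Finset J | mk _ _ R _ => R
/-- Children of an output node. -/
def chs : SPTree I J → List (SPTree I J) | mk _ _ _ cs => cs

end SPTree

/-- TransformCtoT (with the requirements pushed down by the parent passed as the
extra argument `Rin`): at a leaf it outputs the subproblem consisting of the leaf's
element together with all plants involved in its requirements; at an internal node
it performs PropReq, keeps the remaining requirements together with the plants they
involve, and recursively processes every bus child and every non-bus child with the
requirement sets moved into them. -/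
noncomputable def transform (PR : I → J → Prop) [Fintype I] :
    MLC I J → Finset J → SPTree I J
  | .mk A B M R, Rin =>
    if B ++ M = [] then
      SPTree.mk A (A ∪ involved PR (R ∪ Rin)) (R ∪ Rin) []
    else
      SPTree.mk A (involved PR (stayReqs PR B M (R ∪ Rin)))
        (stayReqs PR B M (R ∪ Rin))
        ((B.attach.map fun ⟨c, _hc⟩ => transform PR c (toBus PR B M (R ∪ Rin) c)) ++
         (M.attach.map fun ⟨c, _hc⟩ => transform PR c (toNonbus PR M (R ∪ Rin) c)))

mutual
/-- Number of occurrences of requirement index `j` among the requirement sets of the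
nodes of a multilevel clustering. -/
noncomputable def reqCountM (j : J) : MLC I J → ℕ
  | .mk _ B M R => (if j ∈ R then 1 else 0) + reqCountL j B + reqCountL j M
noncomputable def reqCountL (j : J) : List (MLC I J) → ℕ
  | [] => 0
  | c :: cs => reqCountM j c + reqCountL j cs
end

mutual
/-- Number of occurrences of requirement index `j` among the requirement sets of the
synthesis subproblems of the nodes of an output tree. -/
noncomputable def reqCountS (j : J) : SPTree I J → ℕ
  | .mk _ _ R cs => (if j ∈ R then 1 else 0) + reqCountSL j cs
noncomputable def reqCountSL (j : J) : List (SPTree I J) → ℕ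
  | [] => 0
  | c :: cs => reqCountS j c + reqCountSL j cs
end

mutual
/-- The list of all nodes of an output tree. -/
def allNodes : SPTree I J → List (SPTree I J)
  | .mk A P R cs => .mk A P R cs :: allNodesL cs
def allNodesL : List (SPTree I J) → List (SPTree I J)
  | [] => []
  | c :: cs => allNodes c ++ allNodesL cs
end

mutual
/-- All requirement sets in a multilevel clustering are empty. -/
def allReqsEmpty : MLC I J → Prop
  | .mk _ B M R => R = ∅ ∧ allReqsEmptyL B ∧ allReqsEmptyL M
def allReqsEmptyL : List (MLC I J) → Prop
  | [] => True
  | c :: cs => allReqsEmpty c ∧ allReqsEmptyL cs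
end

mutual
/-- The list of leaves of a multilevel clustering. -/
def leaves : MLC I J → List (MLC I J)
  | .mk A [] [] R => [.mk A [] [] R]
  | .mk _ B M _ => leavesL B ++ leavesL M
def leavesL : List (MLC I J) → List (MLC I J)
  | [] => []
  | c :: cs => leaves c ++ leavesL cs
end

/-- `callRel u v` holds iff, when TransformCtoT is run on the (well-formed) internal
node `v`, it performs a recursive call on `u`, i.e. `u` is one of the bus or non-bus
children of `v` with an updated requirement set. -/
def callRel (u v : MLC I J) : Prop :=
  MLC.WF v ∧ v.children ≠ [] ∧ ∃ c ∈ v.children, ∃ R' : Finset J, u = c.setReqs R'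

/-!
PropReq sends a requirement `r ∈ R` to a child `c` only when the list of related children of
the relevant kind is exactly `[c]`; since relatedness depends on `c` alone, this forces `c` to
occur exactly once in that list of children. Hence the indicators of the destinations of `r`
sum to one, and the three cases of PropReq (one related non-bus child; no related non-bus
child and one related bus child; anything else) partition `R`. For the occurrence count over
the tree, a child receiving `r` cannot already carry `r` if `r` occurred at most once in the
tree before the call, so the count is preserved.
-/
theorem List.sum_map_ite_filter_eq_singleton {α : Type*} (l : List α) (p : α → Bool) :
    (l.map fun c => if l.filter p = [c] then 1 else 0).sum =
      if (l.filter p).length = 1 then 1 else 0 := by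
  by_cases h : (l.filter p).length = 1
  · obtain ⟨c₀, hc₀⟩ := List.length_eq_one_iff.mp h
    have hp : p c₀ := (List.mem_filter.mp (hc₀ ▸ List.mem_singleton_self c₀)).2
    have hiff : ∀ c, l.filter p = [c] ↔ c = c₀ := by simp [hc₀, eq_comm]
    have hc₀_only : l.filter (fun c => c = c₀) = [c₀] := by
      calc l.filter (fun c => c = c₀) = (l.filter p).filter (fun c => c = c₀) := by
            rw [List.filter_filter]
            refine List.filter_congr fun c _ => ?_
            by_cases hc : c = c₀ <;> simp [hc, hp]
        _ = [c₀] := by simp [hc₀]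
    simp [hiff, h, List.sum_map_ite, hc₀_only]
  · have hne : ∀ c, l.filter p ≠ [c] := fun c hc => h (by simp [hc])
    simp [hne, h]

section PropReq

variable (PR : I → J → Prop) (B M : List (MLC I J)) (R : Finset J)

lemma sum_indicator_mem_toNonbus (r : J) :
    (M.map fun c => if r ∈ toNonbus PR M R c then 1 else 0).sum =
      if r ∈ R ∧ (relF PR r M).length = 1 then 1 else 0 := by
  by_cases hr : r ∈ R
  · simp only [toNonbus, Finset.mem_filter, hr, true_and]
    exact List.sum_map_ite_filter_eq_singleton M _
  · simp [toNonbus, hr]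

lemma sum_indicator_mem_toBus (r : J) :
    (B.map fun c => if r ∈ toBus PR B M R c then 1 else 0).sum =
      if r ∈ R ∧ relF PR r M = [] ∧ (relF PR r B).length = 1 then 1 else 0 := by
  by_cases hr : r ∈ R ∧ relF PR r M = []
  · simp only [toBus, Finset.mem_filter, hr, true_and]
    exact List.sum_map_ite_filter_eq_singleton B _
  · simp [toBus, ← and_assoc, hr]

theorem indicator_stay_add_toBus_add_toNonbus (r : J) :
    (if r ∈ stayReqs PR B M R then 1 else 0)
        + (B.map fun c => if r ∈ toBus PR B M R c then 1 else 0).sum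
        + (M.map fun c => if r ∈ toNonbus PR M R c then 1 else 0).sum =
      if r ∈ R then 1 else 0 := by
  rw [sum_indicator_mem_toBus, sum_indicator_mem_toNonbus]
  by_cases hM : relF PR r M = [] <;> simp only [stayReqs, Finset.mem_filter, hM] <;>
    split_ifs <;> simp_all

end PropReq

section ReqCount

variable {j : J}

lemma one_le_reqCountM_of_mem_reqs {c : MLC I J} (h : j ∈ c.reqs) : 1 ≤ reqCountM j c := by
  cases c
  simp only [MLC.reqs] at h
  simp only [reqCountM, h, if_true]
  omega

lemma reqCountM_le_reqCountL_of_mem {c : MLC I J} {l : List (MLC I J)} (h : c ∈ l) :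
    reqCountM j c ≤ reqCountL j l := by
  induction l with
  | nil => cases h
  | cons d l ih =>
    rcases List.mem_cons.mp h with rfl | h
    · simp [reqCountL]
    · simp only [reqCountL]
      have := ih h
      omega

lemma reqCountM_setReqs_union {c : MLC I J} {S : Finset J} (h : j ∈ c.reqs → j ∉ S) :
    reqCountM j (c.setReqs (c.reqs ∪ S)) = reqCountM j c + if j ∈ S then 1 else 0 := by
  obtain ⟨A, B, M, R⟩ := c
  simp only [MLC.reqs, MLC.setReqs, reqCountM, Finset.mem_union] at h ⊢
  by_cases hS : j ∈ S
  · have hR : j ∉ R := fun hR => h hR hS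
    simp only [hS, hR, or_true, if_true, if_false]
    omega
  · simp [hS]

lemma reqCountL_map_setReqs_union (l : List (MLC I J)) (S : MLC I J → Finset J)
    (h : ∀ c ∈ l, j ∈ c.reqs → j ∉ S c) :
    reqCountL j (l.map fun c => c.setReqs (c.reqs ∪ S c)) =
      reqCountL j l + (l.map fun c => if j ∈ S c then 1 else 0).sum := by
  induction l with
  | nil => simp [reqCountL]
  | cons c l ih =>
    simp only [List.map_cons, reqCountL, List.sum_cons,
      reqCountM_setReqs_union (h c List.mem_cons_self),
      ih fun d hd => h d (List.mem_cons_of_mem c hd)]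
    omega

theorem reqCountM_propReq_of_le_one [Fintype I] (PR : I → J → Prop) (A : Finset I)
    (B M : List (MLC I J)) (R : Finset J) (h : reqCountM j (.mk A B M R) ≤ 1) :
    reqCountM j (propReq PR (.mk A B M R)).1 = reqCountM j (.mk A B M R) := by
  have hfresh : ∀ c ∈ B ++ M, j ∈ c.reqs → j ∉ R := by
    intro c hc hjc hjR
    have hle : reqCountM j c ≤ reqCountL j B + reqCountL j M := by
      rcases List.mem_append.mp hc with hc | hc <;>
        have := reqCountM_le_reqCountL_of_mem (j := j) hc <;> omega
    have := one_le_reqCountM_of_mem_reqs hjc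
    simp only [reqCountM, hjR, if_true] at h
    omega
  have hB : ∀ c ∈ B, j ∈ c.reqs → j ∉ toBus PR B M R c := fun c hc hjc hj =>
    hfresh c (List.mem_append_left M hc) hjc (Finset.filter_subset _ _ hj)
  have hM : ∀ c ∈ M, j ∈ c.reqs → j ∉ toNonbus PR M R c := fun c hc hjc hj =>
    hfresh c (List.mem_append_right B hc) hjc (Finset.filter_subset _ _ hj)
  have hcount := indicator_stay_add_toBus_add_toNonbus PR B M R j
  simp only [propReq, reqCountM]
  rw [reqCountL_map_setReqs_union B _ hB, reqCountL_map_setReqs_union M _ hM]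
  omega

end ReqCount

/-- Running PropReq on an internal node `(A, B, M, R)` of a well-formed
multilevel clustering with local buses neither loses nor duplicates requirements:
the requirements that stay at the node and the sets of requirements moved into the
individual (bus and non-bus) children are all subsets of `R`, and every `r ∈ R` ends
up in exactly one of these places (counted over all children, so in particular in
the requirement set of at most one child and in no other node). In particular, if
before the call the requirement sets of all nodes of the tree are pairwise disjoint
with union equal to `Jset`, the same holds after the call. -/
theorem propReq_conserves_requirements {I J : Type} [Fintype I] (PR : I → J → Prop)
    (A : Finset I) (B M : List (MLC I J)) (R : Finset J)
    (hwf : MLC.WF (.mk A B M R)) (hinternal : B ++ M ≠ []) :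
    (stayReqs PR B M R ⊆ R) ∧
    (∀ c ∈ B, toBus PR B M R c ⊆ R) ∧
    (∀ c ∈ M, toNonbus PR M R c ⊆ R) ∧
    (∀ r ∈ R,
      (if r ∈ stayReqs PR B M R then 1 else 0)
        + (B.map fun c => if r ∈ toBus PR B M R c then 1 else 0).sum
        + (M.map fun c => if r ∈ toNonbus PR M R c then 1 else 0).sum = 1) ∧
    (∀ Jset : Finset J,
      ((∀ j ∈ Jset, reqCountM j (MLC.mk A B M R) = 1) ∧
        (∀ j ∉ Jset, reqCountM j (MLC.mk A B M R) = 0)) →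
      ((∀ j ∈ Jset, reqCountM j (propReq PR (.mk A B M R)).1 = 1) ∧
        (∀ j ∉ Jset, reqCountM j (propReq PR (.mk A B M R)).1 = 0))) := by
  refine ⟨Finset.filter_subset _ _, fun _ _ => Finset.filter_subset _ _,
    fun _ _ => Finset.filter_subset _ _, fun r hr => ?_, fun Jset ⟨hin, hout⟩ => ⟨?_, ?_⟩⟩
  · rw [indicator_stay_add_toBus_add_toNonbus, if_pos hr]
  · intro j hj
    rw [reqCountM_propReq_of_le_one PR A B M R (hin j hj).le, hin j hj]
  · intro j hj
    rw [reqCountM_propReq_of_le_one PR A B M R (by simp [hout j hj]), hout j hj]
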